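/- arXiv:2106.01486 — 2 statements merged into one kernel-verified Lean document; each statement's English description precedes it below -/
import Mathlib

section
/- (MacMahon Master Theorem) Let A ∈ M_n(ℂ) and let x = (x₁,...,xₙ) be commuting indeterminates. For each multi-index α ∈ ℕ₀ⁿ, the coefficient of x^α in ∏_{i=1}^n ((Ax)_i)^{α_i} equals the coefficient of x^α in the power series expansion of det(I − Δ(x)A)^{−1}, where Δ(x) = diag(x₁,...,xₙ). -/
/-!
For a square matrix `M` write `c_α(M)` for the coefficient of `x^α` in `∏ i, ((M x)_i)^{α_i}` and
`h_j(M) = ∑_{|α| = j} c_α(M)`. Since `c_α(M)` is a diagonal entry of the matrix of `x ↦ M x` on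
the monomials of degree `|α|`, `h_j(M)` is the trace of the `j`-th symmetric power of `M`, hence
invariant under conjugation. Over an algebraically closed field, conjugate `M` so that its first
column is `(μ, 0, …, 0)`: then `∑ h_j(M) t^j` acquires the factor `∑ μ^a t^a = (1 - μ t)⁻¹` and
`det (1 - t M)` the factor `1 - μ t`, and induction on the size gives
`det (1 - t M) * ∑ h_j(M) t^j = 1`. This is a polynomial identity in the entries of `M`, so it
holds over every commutative ring. Finally `c_α(diag(x) A) = x^α c_α(A)`, so for `M = diag(x) A`
the identity is the image of `(∑_α c_α(A) x^α) * det (1 - diag(x) A) = 1` under the injective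
ring map `x ↦ t x`.
-/

open Finset MvPolynomial

namespace MvPowerSeries

variable {σ R : Type*} [CommSemiring R]

theorem homogeneousComponent_mul_eq_sum (f g : MvPowerSeries σ R) (k : ℕ) :
    homogeneousComponent k (f * g) =
      ∑ p ∈ antidiagonal k, homogeneousComponent p.1 f * homogeneousComponent p.2 g := by
  classical
  ext d
  simp only [coeff_homogeneousComponent, map_sum, coeff_mul, ite_mul, zero_mul, mul_ite, mul_zero]
  rw [Finset.sum_comm]
  have key : ∀ q ∈ antidiagonal d, ∑ p ∈ antidiagonal k,
      (if q.2.degree = p.2 then if q.1.degree = p.1 then coeff q.1 f * coeff q.2 g else 0 else 0) =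
        if d.degree = k then coeff q.1 f * coeff q.2 g else 0 := by
    intro q hq
    have hmem : d.degree = k ↔ (q.1.degree, q.2.degree) ∈ antidiagonal k := by
      rw [HasAntidiagonal.mem_antidiagonal, ← map_add, HasAntidiagonal.mem_antidiagonal.1 hq]
    rw [if_congr hmem rfl rfl, ← sum_ite_eq _ _ fun _ => coeff q.1 f * coeff q.2 g]
    exact sum_congr rfl fun p _ => by grind
  rw [sum_congr rfl key, sum_ite_irrel, sum_const_zero]

theorem homogeneousComponent_one (k : ℕ) :
    homogeneousComponent k (1 : MvPowerSeries σ R) = if k = 0 then 1 else 0 := by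
  classical
  ext d
  rw [coeff_homogeneousComponent, coeff_one, apply_ite (coeff d), coeff_one, map_zero]
  by_cases hd : d = 0
  · simp [hd, eq_comm]
  · simp [hd]

/-- The substitution `f(X) ↦ f(t • X)`. -/
noncomputable def homogeneousSeries : MvPowerSeries σ R →+* PowerSeries (MvPowerSeries σ R) where
  toFun f := PowerSeries.mk fun k => homogeneousComponent k f
  map_one' := by
    ext k : 1
    rw [PowerSeries.coeff_mk, homogeneousComponent_one, PowerSeries.coeff_one]
  map_mul' f g := by
    ext k : 1
    simp only [PowerSeries.coeff_mk, PowerSeries.coeff_mul, homogeneousComponent_mul_eq_sum]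
  map_zero' := by ext; simp
  map_add' f g := by ext; simp

theorem coeff_homogeneousSeries (f : MvPowerSeries σ R) (k : ℕ) :
    PowerSeries.coeff k (homogeneousSeries f) = homogeneousComponent k f :=
  PowerSeries.coeff_mk k fun k => homogeneousComponent k f

theorem homogeneousSeries_injective :
    Function.Injective (homogeneousSeries : MvPowerSeries σ R → _) := by
  intro f g h
  ext d
  have := congrArg (coeff d ∘ PowerSeries.coeff d.degree) h
  simpa [coeff_homogeneousSeries, coeff_homogeneousComponent] using this

theorem homogeneousSeries_X (i : σ) :
    homogeneousSeries (X i : MvPowerSeries σ R) = PowerSeries.C (X i) * PowerSeries.X := by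
  classical
  ext k d : 2
  rw [coeff_homogeneousSeries, coeff_homogeneousComponent, PowerSeries.coeff_C_mul,
    PowerSeries.coeff_X]
  rcases eq_or_ne k 1 with rfl | hk
  · by_cases hd : d = Finsupp.single i 1 <;> simp [hd, coeff_X]
  · by_cases hd : d = Finsupp.single i 1 <;> simp [hd, hk, hk.symm, coeff_X]

theorem homogeneousSeries_C (a : R) :
    homogeneousSeries (C a : MvPowerSeries σ R) = PowerSeries.C (C a) := by
  classical
  ext k d : 2
  rw [coeff_homogeneousSeries, coeff_homogeneousComponent, PowerSeries.coeff_C]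
  rcases eq_or_ne k 0 with rfl | hk
  · by_cases hd : d = 0 <;> simp [hd, coeff_C]
  · by_cases hd : d = 0 <;> simp [hd, hk, hk.symm, coeff_C]

theorem homogeneousComponent_eq_sum_monomial [Fintype σ] [DecidableEq σ]
    (f : MvPowerSeries σ R) (k : ℕ) :
    homogeneousComponent k f =
      ∑ α ∈ (univ : Finset σ).finsuppAntidiag k, monomial α (coeff α f) := by
  ext d
  rw [coeff_homogeneousComponent, map_sum]
  simp only [coeff_monomial, sum_ite_eq, mem_finsuppAntidiag, subset_univ, and_true,
    Finsupp.degree_eq_sum]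

end MvPowerSeries

theorem MvPolynomial.IsHomogeneous.eq_sum_finsuppAntidiag {σ R : Type*} [Fintype σ]
    [DecidableEq σ] [CommSemiring R] {p : MvPolynomial σ R} {j : ℕ} (hp : p.IsHomogeneous j) :
    p = ∑ β ∈ (univ : Finset σ).finsuppAntidiag j, monomial β (coeff β p) := by
  refine p.as_sum.trans (sum_subset (fun β hβ => ?_) fun β _ hβ => ?_)
  · refine mem_finsuppAntidiag.2 ⟨?_, subset_univ _⟩
    by_contra h
    exact mem_support_iff.1 hβ (hp.coeff_eq_zero (by rwa [Finsupp.degree_eq_sum]))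
  · rw [notMem_support_iff.1 hβ, monomial_zero]

theorem Finset.sum_finsuppAntidiag_univ_fin_succ {M : Type*} [AddCommMonoid M] {m : ℕ}
    (f : (Fin (m + 1) →₀ ℕ) → M) (j : ℕ) :
    ∑ α ∈ univ.finsuppAntidiag j, f α =
      ∑ p ∈ antidiagonal j, ∑ β ∈ univ.finsuppAntidiag p.2, f (Finsupp.cons p.1 β) := by
  rw [sum_sigma']
  refine sum_nbij' (fun α => ⟨(α 0, j - α 0), α.tail⟩) (fun p => Finsupp.cons p.1.1 p.2)
    ?_ ?_ (fun α _ => Finsupp.cons_tail α) ?_ (fun α _ => by rw [Finsupp.cons_tail])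
  all_goals simp only [mem_sigma, HasAntidiagonal.mem_antidiagonal, mem_finsuppAntidiag,
    subset_univ, and_true, Fin.sum_univ_succ, Finsupp.tail_apply, Finsupp.cons_zero,
    Finsupp.cons_succ]
  · intro α hα
    have htail : univ.sum ⇑α.tail = ∑ i : Fin m, α i.succ := rfl
    omega
  · rintro ⟨⟨a, b⟩, β⟩ ⟨hab, hβ⟩
    simp only at hab hβ ⊢
    omega
  · rintro ⟨⟨a, b⟩, β⟩ ⟨hab, -⟩
    simp only [Finsupp.tail_cons] at hab ⊢
    grind

theorem PowerSeries.mk_pow_mul_one_sub_C_mul_X {R : Type*} [CommRing R] (a : R) :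
    mk (a ^ ·) * (1 - C a * X) = 1 := by
  simpa [rescale_mk, rescale_X] using congrArg (rescale a) (mk_one_mul_one_sub_eq_one R)

theorem exists_basis_fin_succ_apply_zero {K V : Type*} [Field K] [AddCommGroup V] [Module K V]
    [FiniteDimensional K V] {m : ℕ} (hV : Module.finrank K V = m + 1) {v : V} (hv : v ≠ 0) :
    ∃ b : Module.Basis (Fin (m + 1)) K V, b 0 = v := by
  obtain ⟨N, hN⟩ := Submodule.exists_isCompl (K ∙ v)
  have hrank : Module.finrank K N = m := by
    have := Submodule.finrank_add_eq_of_isCompl hN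
    rw [finrank_span_singleton hv, hV] at this
    omega
  refine ⟨.mkFinCons v (Module.finBasisOfFinrankEq K N hrank) (fun c x hx hc => ?_)
    (fun z => ?_), by simp⟩
  · have hcv : c • v ∈ N := by
      rw [← neg_eq_of_add_eq_zero_left hc]; exact N.neg_mem hx
    have h0 := Submodule.disjoint_def.1 hN.disjoint _
      (Submodule.smul_mem _ c (Submodule.mem_span_singleton_self v)) hcv
    exact (smul_eq_zero.1 h0).resolve_right hv
  · obtain ⟨y, hy, w, hw, rfl⟩ :=
      Submodule.mem_sup.1 (hN.sup_eq_top ▸ Submodule.mem_top (x := z))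
    obtain ⟨a, rfl⟩ := Submodule.mem_span_singleton.1 hy
    exact ⟨-a, by simpa [add_comm, add_assoc] using hw⟩

namespace Matrix

section Semiring

variable {ι κ R : Type*} [Fintype κ] [CommSemiring R]

noncomputable def linearForm (M : Matrix ι κ R) (i : ι) : MvPolynomial κ R :=
  ∑ j, C (M i j) * X j

theorem isHomogeneous_linearForm (M : Matrix ι κ R) (i : ι) :
    (M.linearForm i).IsHomogeneous 1 :=
  IsHomogeneous.sum _ _ 1 fun l _ => (isHomogeneous_X R l).C_mul (M i l)

theorem linearForm_map {S : Type*} [CommSemiring S] (f : R →+* S) (M : Matrix ι κ R) (i : ι) :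
    (M.map f).linearForm i = MvPolynomial.map f (M.linearForm i) := by
  simp [linearForm]

variable [Fintype ι]

noncomputable def linearSubst (M : Matrix ι ι R) : MvPolynomial ι R →ₐ[R] MvPolynomial ι R :=
  aeval M.linearForm

noncomputable def masterCoeff (M : Matrix ι ι R) (α : ι →₀ ℕ) : R :=
  coeff α (∏ i, M.linearForm i ^ α i)

noncomputable def masterSeries (M : Matrix ι ι R) : MvPowerSeries ι R :=
  fun α => M.masterCoeff α

theorem coeff_masterSeries (M : Matrix ι ι R) (α : ι →₀ ℕ) :
    MvPowerSeries.coeff α M.masterSeries = M.masterCoeff α :=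
  rfl

theorem linearSubst_X (M : Matrix ι ι R) (i : ι) : M.linearSubst (X i) = M.linearForm i :=
  aeval_X _ _

theorem linearSubst_monomial_one (M : Matrix ι ι R) (α : ι →₀ ℕ) :
    M.linearSubst (monomial α 1) = ∏ i, M.linearForm i ^ α i := by
  rw [linearSubst, aeval_monomial, map_one, one_mul, Finsupp.prod_pow]

theorem linearSubst_linearForm (M N : Matrix ι ι R) (i : ι) :
    N.linearSubst (M.linearForm i) = (M * N).linearForm i := by
  have h (l : ι) : N.linearSubst (C (M i l) * X l) = ∑ k, C (M i l * N l k) * X k := by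
    rw [map_mul, linearSubst_X, linearSubst, aeval_C, algebraMap_eq, linearForm, mul_sum]
    simp only [← mul_assoc, ← C_mul]
  rw [linearForm, map_sum, sum_congr rfl fun l _ => h l, sum_comm]
  simp only [linearForm, mul_apply, map_sum, sum_mul]

theorem linearSubst_mul (M N : Matrix ι ι R) :
    (M * N).linearSubst = N.linearSubst.comp M.linearSubst :=
  algHom_ext fun i => by simp only [AlgHom.comp_apply, linearSubst_X, linearSubst_linearForm]

theorem isHomogeneous_linearSubst_monomial_one (M : Matrix ι ι R) (α : ι →₀ ℕ) :
    (M.linearSubst (monomial α 1)).IsHomogeneous α.degree := by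
  rw [linearSubst_monomial_one, Finsupp.degree_eq_sum]
  exact IsHomogeneous.prod _ _ _ fun i _ => by
    simpa using (M.isHomogeneous_linearForm i).pow (α i)

theorem masterCoeff_map {S : Type*} [CommSemiring S] (f : R →+* S) (M : Matrix ι ι R)
    (α : ι →₀ ℕ) : (M.map f).masterCoeff α = f (M.masterCoeff α) := by
  simp only [masterCoeff, linearForm_map, ← map_pow, ← map_prod, coeff_map]

theorem masterCoeff_diagonal_mul [DecidableEq ι] (d : ι → R) (M : Matrix ι ι R) (α : ι →₀ ℕ) :
    (diagonal d * M).masterCoeff α = (∏ i, d i ^ α i) * M.masterCoeff α := by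
  have h (i : ι) : (diagonal d * M).linearForm i = C (d i) * M.linearForm i := by
    simp only [linearForm, diagonal_mul, C_mul, mul_sum, mul_assoc]
  simp only [masterCoeff, h, mul_pow, prod_mul_distrib, ← C_pow, ← map_prod, coeff_C_mul]

variable [DecidableEq ι]

noncomputable def symPowTrace (M : Matrix ι ι R) (j : ℕ) : R :=
  ∑ α ∈ (univ : Finset ι).finsuppAntidiag j, M.masterCoeff α

noncomputable def symPowTraceSeries (M : Matrix ι ι R) : PowerSeries R :=
  PowerSeries.mk M.symPowTrace

/-- The `j`-th symmetric power of `M`: the transposed matrix of `M.linearSubst` on the monomials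
of degree `j`. -/
noncomputable def symPowMatrix (M : Matrix ι ι R) (j : ℕ) :
    Matrix ((univ : Finset ι).finsuppAntidiag j) ((univ : Finset ι).finsuppAntidiag j) R :=
  fun α β => coeff β (M.linearSubst (monomial α 1))

theorem linearSubst_one : (1 : Matrix ι ι R).linearSubst = AlgHom.id R _ :=
  algHom_ext fun i => by simp [linearSubst, linearForm, one_apply]

theorem trace_symPowMatrix (M : Matrix ι ι R) (j : ℕ) :
    (M.symPowMatrix j).trace = M.symPowTrace j := by
  simp only [trace, diag, symPowMatrix, symPowTrace, linearSubst_monomial_one, masterCoeff]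
  exact Finset.sum_coe_sort _ fun α => coeff α (∏ i, M.linearForm i ^ α i)

theorem symPowMatrix_one (j : ℕ) : (1 : Matrix ι ι R).symPowMatrix j = 1 := by
  ext α β
  rw [symPowMatrix, linearSubst_one, AlgHom.id_apply, coeff_monomial, one_apply]
  exact if_congr Subtype.ext_iff.symm rfl rfl

theorem symPowMatrix_mul (M N : Matrix ι ι R) (j : ℕ) :
    (M * N).symPowMatrix j = M.symPowMatrix j * N.symPowMatrix j := by
  ext α γ
  have hα : α.1.degree = j := by
    rw [Finsupp.degree_eq_sum]; exact (mem_finsuppAntidiag.1 α.2).1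
  have hterm (β : ι →₀ ℕ) :
      coeff γ (N.linearSubst (monomial β (coeff β (M.linearSubst (monomial α 1))))) =
        coeff β (M.linearSubst (monomial α 1)) * coeff γ (N.linearSubst (monomial β 1)) := by
    rw [← smul_eq_mul, ← coeff_smul, ← map_smul, smul_monomial, smul_eq_mul, mul_one]
  rw [symPowMatrix, linearSubst_mul, AlgHom.comp_apply,
    (isHomogeneous_linearSubst_monomial_one M α).eq_sum_finsuppAntidiag, hα, map_sum, coeff_sum,
    mul_apply, ← sum_coe_sort]
  exact sum_congr rfl fun β _ => hterm β

theorem symPowTrace_units_conj (Q : (Matrix ι ι R)ˣ) (N : Matrix ι ι R) (j : ℕ) :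
    (Q.val * N * Q⁻¹.val).symPowTrace j = N.symPowTrace j := by
  rw [← trace_symPowMatrix, ← trace_symPowMatrix, symPowMatrix_mul, symPowMatrix_mul,
    trace_mul_cycle, ← symPowMatrix_mul, Units.inv_mul, symPowMatrix_one, Matrix.one_mul]

theorem symPowTraceSeries_units_conj (Q : (Matrix ι ι R)ˣ) (N : Matrix ι ι R) :
    (Q.val * N * Q⁻¹.val).symPowTraceSeries = N.symPowTraceSeries :=
  congrArg PowerSeries.mk (funext (symPowTrace_units_conj Q N))

theorem symPowTraceSeries_map {S : Type*} [CommSemiring S] (f : R →+* S) (M : Matrix ι ι R) :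
    (M.map f).symPowTraceSeries = PowerSeries.map f M.symPowTraceSeries := by
  ext j
  simp [symPowTraceSeries, symPowTrace, masterCoeff_map]

end Semiring

section FinSucc

variable {ι R : Type*} {m : ℕ}

theorem finSuccEquiv_linearForm [CommSemiring R] (M : Matrix ι (Fin (m + 1)) R) (i : ι) :
    finSuccEquiv R m (M.linearForm i) = Polynomial.C (C (M i 0)) * Polynomial.X +
      Polynomial.C ((M.submatrix id Fin.succ).linearForm i) := by
  simp [linearForm, Fin.sum_univ_succ, finSuccEquiv_apply]

section ColZero

variable [CommSemiring R] (N : Matrix (Fin (m + 1)) (Fin (m + 1)) R)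
  (hN : ∀ i : Fin m, N i.succ 0 = 0)
include hN

theorem masterCoeff_eq_mul_masterCoeff_submatrix (α : Fin (m + 1) →₀ ℕ) :
    N.masterCoeff α = N 0 0 ^ α 0 * (N.submatrix Fin.succ Fin.succ).masterCoeff α.tail := by
  set B := N.submatrix Fin.succ Fin.succ
  have hrows : finSuccEquiv R m (∏ i, N.linearForm i ^ α i) =
      (Polynomial.C (C (N 0 0)) * Polynomial.X +
          Polynomial.C ((N.submatrix id Fin.succ).linearForm 0)) ^ α 0 *
        Polynomial.C (∏ i, B.linearForm i ^ α.tail i) := by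
    rw [Fin.prod_univ_succ, map_mul, map_pow, finSuccEquiv_linearForm, map_prod, map_prod]
    congr 1
    refine prod_congr rfl fun i _ => ?_
    rw [map_pow, map_pow, finSuccEquiv_linearForm, hN, map_zero, map_zero, zero_mul, zero_add]
    rfl
  have hcoeff (p : MvPolynomial (Fin (m + 1)) R) :
      coeff α p = coeff α.tail ((finSuccEquiv R m p).coeff (α 0)) := by
    rw [finSuccEquiv_coeff_coeff, Finsupp.cons_tail]
  -- the other rows do not involve `X 0`, so only the leading term of the first row contributes
  have hlin (a b : MvPolynomial (Fin m) R) (k : ℕ) :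
      ((Polynomial.C a * Polynomial.X + Polynomial.C b) ^ k).coeff k = a ^ k := by
    simpa using Polynomial.coeff_pow_of_natDegree_le (m := k)
      (Polynomial.natDegree_linear_le (a := a) (b := b))
  rw [masterCoeff, hcoeff, hrows, Polynomial.coeff_mul_C, hlin, ← C_pow, coeff_C_mul, masterCoeff]

theorem symPowTrace_eq_sum_of_col_zero (j : ℕ) :
    N.symPowTrace j = ∑ p ∈ antidiagonal j,
      N 0 0 ^ p.1 * (N.submatrix Fin.succ Fin.succ).symPowTrace p.2 := by
  rw [symPowTrace, sum_finsuppAntidiag_univ_fin_succ]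
  refine sum_congr rfl fun p _ => ?_
  simp only [masterCoeff_eq_mul_masterCoeff_submatrix N hN, Finsupp.cons_zero,
    Finsupp.tail_cons, symPowTrace, mul_sum]

theorem symPowTraceSeries_eq_mul_of_col_zero :
    N.symPowTraceSeries =
      PowerSeries.mk (N 0 0 ^ ·) * (N.submatrix Fin.succ Fin.succ).symPowTraceSeries := by
  ext j
  simp only [symPowTraceSeries, PowerSeries.coeff_mk, PowerSeries.coeff_mul,
    symPowTrace_eq_sum_of_col_zero N hN]

end ColZero

theorem charpolyRev_eq_mul_of_col_zero [CommRing R] (N : Matrix (Fin (m + 1)) (Fin (m + 1)) R)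
    (hN : ∀ i : Fin m, N i.succ 0 = 0) :
    N.charpolyRev =
      (1 - Polynomial.C (N 0 0) * Polynomial.X) * (N.submatrix Fin.succ Fin.succ).charpolyRev := by
  rw [charpolyRev, det_succ_column_zero, Fin.sum_univ_succ, sum_eq_zero fun i _ => ?_]
  · have hsub :
        (1 - (Polynomial.X : Polynomial R) • N.map Polynomial.C).submatrix Fin.succ Fin.succ =
        1 - (Polynomial.X : Polynomial R) • (N.submatrix Fin.succ Fin.succ).map Polynomial.C := by
      ext i j
      simp [one_apply]
    rw [Fin.succAbove_zero, hsub, charpolyRev]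
    simp only [Fin.val_zero, pow_zero, one_mul, add_zero, sub_apply, one_apply_eq, smul_apply,
      map_apply, smul_eq_mul, mul_comm (Polynomial.X : Polynomial R)]
  · simp [hN]

end FinSucc

section CommRing

variable {ι R : Type*} [Fintype ι] [DecidableEq ι] [CommRing R]

theorem charpolyRev_units_conj (Q : (Matrix ι ι R)ˣ) (N : Matrix ι ι R) :
    (Q.val * N * Q⁻¹.val).charpolyRev = N.charpolyRev := by
  rw [← reverse_charpoly, ← reverse_charpoly, coe_units_inv, charpoly_units_conj]

theorem coe_charpolyRev_map {S : Type*} [CommRing S] (f : R →+* S) (M : Matrix ι ι R) :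
    ((M.map f).charpolyRev : PowerSeries S) = PowerSeries.map f M.charpolyRev := by
  have hmap : (M.map f).charpolyRev = M.charpolyRev.map f := by
    rw [charpolyRev, charpolyRev, ← Polynomial.coe_mapRingHom, RingHom.map_det]
    congr 1
    ext i j
    simp [one_apply, apply_ite]
  ext n
  simp [hmap]

theorem map_coe_charpolyRev_mul_symPowTraceSeries {S : Type*} [CommRing S] (f : R →+* S)
    (M : Matrix ι ι R) :
    PowerSeries.map f ((M.charpolyRev : PowerSeries R) * M.symPowTraceSeries) =
      ((M.map f).charpolyRev : PowerSeries S) * (M.map f).symPowTraceSeries := by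
  rw [map_mul, coe_charpolyRev_map, symPowTraceSeries_map]

end CommRing

theorem exists_units_conj_col_zero_triangular {K : Type*} [Field K] [IsAlgClosed K] {m : ℕ}
    (M : Matrix (Fin (m + 1)) (Fin (m + 1)) K) :
    ∃ (Q : (Matrix (Fin (m + 1)) (Fin (m + 1)) K)ˣ) (N : Matrix (Fin (m + 1)) (Fin (m + 1)) K),
      M = Q.val * N * Q⁻¹.val ∧ ∀ i : Fin m, N i.succ 0 = 0 := by
  obtain ⟨μ, hμ⟩ := Module.End.exists_eigenvalue (toLin' M)
  obtain ⟨v, hv⟩ := hμ.exists_hasEigenvector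
  obtain ⟨b, hb⟩ := exists_basis_fin_succ_apply_zero (Module.finrank_fin_fun K) hv.2
  let e := Pi.basisFun K (Fin (m + 1))
  let Q : (Matrix (Fin (m + 1)) (Fin (m + 1)) K)ˣ :=
    ⟨e.toMatrix b, b.toMatrix e, e.toMatrix_mul_toMatrix_flip b, b.toMatrix_mul_toMatrix_flip e⟩
  have hN : Q⁻¹.val * M * Q.val = LinearMap.toMatrix b b (toLin' M) := by
    rw [← basis_toMatrix_mul_linearMap_toMatrix_mul_basis_toMatrix (b' := e) (c' := e),
      LinearMap.toMatrix_eq_toMatrix', LinearMap.toMatrix'_toLin']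
    rfl
  refine ⟨Q, Q⁻¹.val * M * Q.val, ?_, fun i => ?_⟩
  · rw [← mul_assoc, ← mul_assoc, Units.mul_inv, one_mul, mul_assoc, Units.mul_inv, mul_one]
  · rw [hN, LinearMap.toMatrix_apply, hb, hv.apply_eq_smul, ← hb, map_smul, b.repr_self]
    simp [Fin.succ_ne_zero]

theorem coe_charpolyRev_mul_symPowTraceSeries_of_isAlgClosed {K : Type*} [Field K]
    [IsAlgClosed K] : ∀ {m : ℕ} (M : Matrix (Fin m) (Fin m) K),
    (M.charpolyRev : PowerSeries K) * M.symPowTraceSeries = 1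
  | 0, M => by
    have : M.symPowTraceSeries = 1 := by
      ext j
      simp only [symPowTraceSeries, symPowTrace, masterCoeff, PowerSeries.coeff_mk,
        PowerSeries.coeff_one, univ_eq_empty, finsuppAntidiag_empty, prod_empty]
      split_ifs <;> simp
    simp [charpolyRev, this]
  | m + 1, M => by
    obtain ⟨Q, N, rfl, hN⟩ := exists_units_conj_col_zero_triangular M
    rw [charpolyRev_units_conj, symPowTraceSeries_units_conj, charpolyRev_eq_mul_of_col_zero N hN,
      symPowTraceSeries_eq_mul_of_col_zero N hN]
    calc _ = (PowerSeries.mk (N 0 0 ^ ·) * (1 - PowerSeries.C (N 0 0) * PowerSeries.X)) *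
          (((N.submatrix Fin.succ Fin.succ).charpolyRev : PowerSeries K) *
            (N.submatrix Fin.succ Fin.succ).symPowTraceSeries) := by
          push_cast; ring
      _ = 1 := by
          rw [PowerSeries.mk_pow_mul_one_sub_C_mul_X,
            coe_charpolyRev_mul_symPowTraceSeries_of_isAlgClosed, one_mul]

theorem coe_charpolyRev_mul_symPowTraceSeries {R : Type*} [CommRing R] {m : ℕ}
    (M : Matrix (Fin m) (Fin m) R) :
    (M.charpolyRev : PowerSeries R) * M.symPowTraceSeries = 1 := by
  have hℤ (A : Matrix (Fin m) (Fin m) ℤ) :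
      (A.charpolyRev : PowerSeries ℤ) * A.symPowTraceSeries = 1 := by
    refine PowerSeries.map_injective (Int.castRingHom ℂ) Int.cast_injective ?_
    rw [map_coe_charpolyRev_mul_symPowTraceSeries, map_one]
    exact coe_charpolyRev_mul_symPowTraceSeries_of_isAlgClosed _
  set Y := mvPolynomialX (Fin m) (Fin m) ℤ
  have hY : (Y.charpolyRev : PowerSeries (MvPolynomial (Fin m × Fin m) ℤ)) *
      Y.symPowTraceSeries = 1 := by
    ext k : 1
    refine MvPolynomial.funext fun x => ?_
    have := congrArg (PowerSeries.coeff k)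
      ((map_coe_charpolyRev_mul_symPowTraceSeries (eval x) Y).trans (hℤ _))
    rw [PowerSeries.coeff_map] at this
    rw [this, PowerSeries.coeff_one, PowerSeries.coeff_one, apply_ite (eval x), map_one, map_zero]
  have hM : Y.map (eval₂Hom (Int.castRingHom R) fun p => M p.1 p.2) = M :=
    mvPolynomialX_map_eval₂ _ M
  rw [← hM, ← map_coe_charpolyRev_mul_symPowTraceSeries, hY, map_one]

section MvPowerSeries

variable {ι R : Type*} [Fintype ι] [DecidableEq ι]

theorem homogeneousSeries_masterSeries [CommSemiring R] (A : Matrix ι ι R) :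
    MvPowerSeries.homogeneousSeries A.masterSeries =
      (diagonal MvPowerSeries.X * A.map MvPowerSeries.C).symPowTraceSeries := by
  ext j : 1
  rw [MvPowerSeries.coeff_homogeneousSeries, MvPowerSeries.homogeneousComponent_eq_sum_monomial,
    symPowTraceSeries, PowerSeries.coeff_mk, symPowTrace]
  refine sum_congr rfl fun α _ => ?_
  rw [masterCoeff_diagonal_mul, masterCoeff_map, coeff_masterSeries, MvPowerSeries.monomial_eq',
    Finsupp.prod_pow, mul_comm]

theorem homogeneousSeries_det_one_sub_diagonal_X_mul [CommRing R] (A : Matrix ι ι R) :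
    MvPowerSeries.homogeneousSeries (1 - diagonal MvPowerSeries.X * A.map MvPowerSeries.C).det =
      ((diagonal MvPowerSeries.X * A.map MvPowerSeries.C).charpolyRev :
        PowerSeries (MvPowerSeries ι R)) := by
  rw [RingHom.map_det, charpolyRev, ← Polynomial.coeToPowerSeries.ringHom_apply, RingHom.map_det]
  congr 1
  ext i j : 1
  simp [one_apply, diagonal_mul, MvPowerSeries.homogeneousSeries_X,
    MvPowerSeries.homogeneousSeries_C, apply_ite]
  ring

theorem coe_det_one_sub_diagonal_X_mul [CommRing R] (A : Matrix ι ι R) :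
    (((1 - diagonal (X : ι → MvPolynomial ι R) * A.map C).det : MvPolynomial ι R) :
      MvPowerSeries ι R) = (1 - diagonal MvPowerSeries.X * A.map MvPowerSeries.C).det := by
  rw [← coeToMvPowerSeries.ringHom_apply, RingHom.map_det, map_sub, map_one, map_mul,
    RingHom.mapMatrix_apply, RingHom.mapMatrix_apply, diagonal_map (map_zero _), map_map]
  simp [Function.comp_def]

end MvPowerSeries

theorem masterSeries_mul_det_one_sub_diagonal_X_mul {R : Type*} [CommRing R] {m : ℕ}
    (A : Matrix (Fin m) (Fin m) R) :
    A.masterSeries * (1 - diagonal MvPowerSeries.X * A.map MvPowerSeries.C).det = 1 := by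
  apply MvPowerSeries.homogeneousSeries_injective
  rw [map_mul, map_one, homogeneousSeries_masterSeries,
    homogeneousSeries_det_one_sub_diagonal_X_mul, mul_comm,
    coe_charpolyRev_mul_symPowTraceSeries]

end Matrix

/-- **MacMahon Master Theorem.** The coefficient of `x^α` in `∏ i ((Ax)_i)^{α_i}` equals
the coefficient of `x^α` in the power series expansion of `det(I - Δ(x)A)⁻¹`. -/
theorem macmahon_master (n : ℕ) (A : Matrix (Fin n) (Fin n) ℂ) (α : Fin n →₀ ℕ) :
    MvPolynomial.coeff α (∏ i, (∑ j, MvPolynomial.C (A i j) * MvPolynomial.X j) ^ α i) =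
      MvPowerSeries.coeff α
        (((1 - Matrix.diagonal (fun i => (MvPolynomial.X i : MvPolynomial (Fin n) ℂ)) *
              A.map MvPolynomial.C).det : MvPowerSeries (Fin n) ℂ))⁻¹ := by
  set D := (1 - Matrix.diagonal MvPowerSeries.X * A.map MvPowerSeries.C).det
  have hmul : A.masterSeries * D = 1 := A.masterSeries_mul_det_one_sub_diagonal_X_mul
  have hD : MvPowerSeries.constantCoeff D ≠ 0 :=
    right_ne_zero_of_mul_eq_one (by rw [← map_mul, hmul, map_one])
  rw [Matrix.coe_det_one_sub_diagonal_X_mul, ← (MvPowerSeries.eq_inv_iff_mul_eq_one hD).2 hmul,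
    Matrix.coeff_masterSeries]
  rfl
end

section
/- For every k ∈ ℕ and every nonzero x ∈ ℝⁿ, the complete homogeneous symmetric polynomial of even degree is strictly positive: h_{2k}(x) > 0. In particular, h_{2k} is positive definite on ℝⁿ (h_{2k}(x) ≥ 0 with equality iff x = 0). -/
open Finset

/-- The complete homogeneous symmetric polynomial `h_k` in `n` real variables. -/
noncomputable def hpolyR (n k : ℕ) (x : Fin n → ℝ) : ℝ :=
  ∑ α ∈ Finset.filter (fun α : Fin n → ℕ => ∑ i, α i = k)
      (Fintype.piFinset fun _ => Finset.range (k + 1)), ∏ i, x i ^ α i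

/-- The index set in `hpolyR` is `piAntidiag univ k`. -/
lemma hpoly_index_eq (n k : ℕ) :
    Finset.filter (fun α : Fin n → ℕ => ∑ i, α i = k)
      (Fintype.piFinset fun _ => Finset.range (k + 1)) =
    piAntidiag (univ : Finset (Fin n)) k := by
  ext α
  simp only [mem_filter, Fintype.mem_piFinset, mem_range, mem_piAntidiag, mem_univ,
    implies_true, and_true]
  constructor
  · rintro ⟨-, h⟩; exact h
  · intro h
    refine ⟨fun i => ?_, h⟩
    have h2 : α i ≤ ∑ j, α j := Finset.single_le_sum (fun j _ => Nat.zero_le _) (mem_univ i)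
    rw [h] at h2
    omega

/-- Multivariate Vandermonde identity. -/
lemma multi_vandermonde {ι : Type*} [DecidableEq ι] (s : Finset ι) (γ : ι → ℕ) (k : ℕ) :
    ∑ α ∈ s.piAntidiag k, ∏ i ∈ s, (γ i).choose (α i) = (∑ i ∈ s, γ i).choose k := by
  induction s using Finset.cons_induction generalizing k with
  | empty =>
    simp [piAntidiag_empty]
    split <;> simp_all [Nat.choose_self, Nat.choose_eq_zero_of_lt, Nat.pos_of_ne_zero]
  | cons i s hi ih =>
    rw [piAntidiag_cons hi k, Finset.sum_disjiUnion]
    rw [Finset.sum_cons, Nat.add_choose_eq]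
    refine Finset.sum_congr rfl fun p hp => ?_
    rw [Finset.sum_map]
    simp only [addRightEmbedding_apply]
    have : ∀ α ∈ s.piAntidiag p.2,
        ∏ j ∈ cons i s hi, (γ j).choose ((α + fun t => if t = i then p.1 else 0) j)
          = (γ i).choose p.1 * ∏ j ∈ s, (γ j).choose (α j) := by
      intro α hα
      rw [Finset.prod_cons]
      simp only [mem_piAntidiag] at hα
      have hαi : α i = 0 := by
        by_contra h; exact hi (hα.2 i h)
      congr 1
      · simp [Pi.add_apply, hαi]
      · refine Finset.prod_congr rfl fun j hj => ?_
        have : j ≠ i := fun h => hi (h ▸ hj)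
        simp [Pi.add_apply, this]
    rw [Finset.sum_congr rfl this, ← Finset.mul_sum, ih]

/-- Single-variable symmetric Vandermonde over an extended range. -/
lemma vandermonde_range (a b k : ℕ) (ha : a ≤ k) :
    ∑ j ∈ range (k + 1), a.choose j * b.choose j = (a + b).choose a := by
  have h1 : ∑ j ∈ range (a + 1), a.choose j * b.choose j = (a + b).choose a := by
    rw [Nat.add_choose_eq, Finset.Nat.sum_antidiagonal_eq_sum_range_succ_mk]
    rw [← Finset.sum_range_reflect (fun j => a.choose j * b.choose j) (a + 1)]
    refine Finset.sum_congr rfl fun i hi => ?_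
    simp only [mem_range] at hi
    have hi' : i ≤ a := by omega
    have hred : a + 1 - 1 - i = a - i := by omega
    rw [hred, Nat.choose_symm hi']
  rw [← h1]
  symm
  apply Finset.sum_subset
  · intro j hj; simp only [mem_range] at *; omega
  · intro j _ hj
    simp only [mem_range, not_lt] at hj
    rw [Nat.choose_eq_zero_of_lt (by omega), zero_mul]

/-- Summing the product of binomial pairs over all exponent tuples. -/
lemma gamma_sum (n k : ℕ) (α β : Fin n → ℕ) (hα : ∀ i, α i ≤ k) :
    ∑ γ ∈ Fintype.piFinset (fun _ : Fin n => range (k + 1)),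
        ∏ i, (α i).choose (γ i) * (β i).choose (γ i)
      = ∏ i, (α i + β i).choose (α i) := by
  rw [← Finset.prod_univ_sum (t := fun _ => range (k + 1))
    (f := fun i j => (α i).choose j * (β i).choose j)]
  exact Finset.prod_congr rfl fun i _ => vandermonde_range _ _ _ (hα i)

set_option maxHeartbeats 1600000 in
/-- The sum-of-squares identity for complete homogeneous symmetric polynomials. -/
lemma hpoly_sos (n k : ℕ) (x : Fin n → ℝ) :
    ((2 * k).choose k : ℝ) * hpolyR n (2 * k) x =
      ∑ γ ∈ Fintype.piFinset (fun _ : Fin n => range (k + 1)),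
        (∑ α ∈ piAntidiag (univ : Finset (Fin n)) k,
          ((∏ i, (α i).choose (γ i) : ℕ) : ℝ) * ∏ i, x i ^ α i) ^ 2 := by
  -- Expand the right-hand side
  have rhs_eq :
      ∑ γ ∈ Fintype.piFinset (fun _ : Fin n => range (k + 1)),
        (∑ α ∈ piAntidiag (univ : Finset (Fin n)) k,
          ((∏ i, (α i).choose (γ i) : ℕ) : ℝ) * ∏ i, x i ^ α i) ^ 2
      = ∑ α ∈ piAntidiag (univ : Finset (Fin n)) k,
          ∑ β ∈ piAntidiag (univ : Finset (Fin n)) k,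
            ((∏ i, (α i + β i).choose (α i) : ℕ) : ℝ) *
              ((∏ i, x i ^ α i) * ∏ i, x i ^ β i) := by
    have step1 : ∀ γ : Fin n → ℕ, (∑ α ∈ piAntidiag (univ : Finset (Fin n)) k,
          ((∏ i, (α i).choose (γ i) : ℕ) : ℝ) * ∏ i, x i ^ α i) ^ 2
        = ∑ α ∈ piAntidiag (univ : Finset (Fin n)) k,
            ∑ β ∈ piAntidiag (univ : Finset (Fin n)) k,
              (((∏ i, (α i).choose (γ i) : ℕ) : ℝ) * ((∏ i, (β i).choose (γ i) : ℕ) : ℝ)) *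
                ((∏ i, x i ^ α i) * ∏ i, x i ^ β i) := by
      intro γ
      rw [sq, Finset.sum_mul_sum]
      exact Finset.sum_congr rfl fun α _ => Finset.sum_congr rfl fun β _ => by ring
    rw [Finset.sum_congr rfl fun γ _ => step1 γ]
    rw [Finset.sum_comm]
    refine Finset.sum_congr rfl fun α hα => ?_
    rw [Finset.sum_comm]
    refine Finset.sum_congr rfl fun β hβ => ?_
    rw [← Finset.sum_mul]
    congr 1
    have hαk : ∀ i, α i ≤ k := by
      simp only [mem_piAntidiag] at hα
      intro i
      calc α i ≤ ∑ j, α j := Finset.single_le_sum (fun j _ => Nat.zero_le _) (mem_univ i)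
        _ = k := hα.1
    simp only [← Nat.cast_mul, ← Finset.prod_mul_distrib, ← Nat.cast_sum]
    exact_mod_cast gamma_sum n k α β hαk
  rw [rhs_eq]
  -- Expand the left-hand side
  unfold hpolyR
  rw [hpoly_index_eq, Finset.mul_sum]
  have lhs_eq : ∀ δ ∈ piAntidiag (univ : Finset (Fin n)) (2 * k),
      ((2 * k).choose k : ℝ) * ∏ i, x i ^ δ i
      = ∑ α ∈ (piAntidiag (univ : Finset (Fin n)) k).filter (fun α => ∀ i, α i ≤ δ i),
          ((∏ i, (δ i).choose (α i) : ℕ) : ℝ) * ∏ i, x i ^ δ i := by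
    intro δ hδ
    simp only [mem_piAntidiag] at hδ
    have hv : ∑ α ∈ piAntidiag (univ : Finset (Fin n)) k, ∏ i, (δ i).choose (α i)
        = (2 * k).choose k := by rw [multi_vandermonde, hδ.1]
    have hfil : ∑ α ∈ (piAntidiag (univ : Finset (Fin n)) k).filter (fun α => ∀ i, α i ≤ δ i),
          ((∏ i, (δ i).choose (α i) : ℕ) : ℝ)
        = ∑ α ∈ piAntidiag (univ : Finset (Fin n)) k, ((∏ i, (δ i).choose (α i) : ℕ) : ℝ) := by
      apply Finset.sum_subset (Finset.filter_subset _ _)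
      intro α hα hα'
      simp only [mem_filter, hα, true_and, not_forall, not_le] at hα'
      obtain ⟨i, hi⟩ := hα'
      rw [Finset.prod_eq_zero (mem_univ i) (Nat.choose_eq_zero_of_lt hi)]
      simp
    rw [← Finset.sum_mul, hfil, ← Nat.cast_sum, hv]
  rw [Finset.sum_congr rfl lhs_eq]
  rw [Finset.sum_sigma', Finset.sum_sigma']
  refine Finset.sum_nbij' (fun p => ⟨p.2, fun i => p.1 i - p.2 i⟩)
    (fun q => ⟨q.1 + q.2, q.1⟩) ?_ ?_ ?_ ?_ ?_
  · rintro ⟨δ, α⟩ hp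
    simp only [Finset.mem_sigma, mem_filter, mem_piAntidiag, mem_univ, implies_true,
      and_true] at hp ⊢
    obtain ⟨hδ, hα, hle⟩ := hp
    refine ⟨hα, ?_⟩
    have hsub : ∑ i, (δ i - α i) = ∑ i, δ i - ∑ i, α i :=
      Finset.sum_tsub_distrib _ (fun i _ => hle i)
    have hδ' : ∑ i, δ i = 2 * k := hδ
    have hα' : ∑ i, α i = k := hα
    rw [hsub, hδ', hα']
    omega
  · rintro ⟨α, β⟩ hq
    simp only [Finset.mem_sigma, mem_piAntidiag, mem_univ, implies_true, and_true] at hq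
    simp only [Finset.mem_sigma, mem_filter, mem_piAntidiag, mem_univ, implies_true, and_true,
      Pi.add_apply]
    refine ⟨?_, hq.1, fun i => Nat.le_add_right _ _⟩
    have h1 : ∑ i, α i = k := hq.1
    have h2 : ∑ i, β i = k := hq.2
    rw [Finset.sum_add_distrib, h1, h2]
    ring
  · rintro ⟨δ, α⟩ hp
    simp only [Finset.mem_sigma, mem_filter, mem_piAntidiag, mem_univ, implies_true,
      and_true] at hp
    have hle := hp.2.2
    have h1 : (α + fun i => δ i - α i) = δ := by
      funext i
      simp only [Pi.add_apply]
      exact Nat.add_sub_cancel' (hle i)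
    exact Sigma.ext h1 (heq_of_eq rfl)
  · rintro ⟨α, β⟩ _
    refine Sigma.ext rfl (heq_of_eq ?_)
    funext i
    simp only [Pi.add_apply]
    omega
  · rintro ⟨δ, α⟩ hp
    simp only [Finset.mem_sigma, mem_filter, mem_piAntidiag, mem_univ, implies_true,
      and_true] at hp
    have hle := hp.2.2
    have hrec : ∀ i, α i + (δ i - α i) = δ i := fun i => Nat.add_sub_cancel' (hle i)
    simp only [Pi.add_apply]
    congr 1
    · congr 1
      exact Finset.prod_congr rfl fun i _ => by rw [hrec i]
    · rw [← Finset.prod_mul_distrib]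
      exact Finset.prod_congr rfl fun i _ => by rw [← pow_add, hrec i]

/-- Even degree complete homogeneous symmetric polynomials are positive definite on `ℝⁿ`:
`h_{2k}(x) > 0` for `x ≠ 0`, and for `k ≥ 1`, `h_{2k}(x) ≥ 0` with equality iff `x = 0`. -/
theorem hpolyR_even_positive_definite (n k : ℕ) (x : Fin n → ℝ) :
    (x ≠ 0 → 0 < hpolyR n (2 * k) x) ∧
      (0 < k → 0 ≤ hpolyR n (2 * k) x ∧ (hpolyR n (2 * k) x = 0 ↔ x = 0)) := by
  have hC : (0 : ℝ) < ((2 * k).choose k : ℝ) := by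
    exact_mod_cast Nat.choose_pos (by omega)
  have key := hpoly_sos n k x
  have hnonneg : 0 ≤ hpolyR n (2 * k) x := by
    have : 0 ≤ ((2 * k).choose k : ℝ) * hpolyR n (2 * k) x := by
      rw [key]; exact Finset.sum_nonneg fun γ _ => sq_nonneg _
    nlinarith
  have hpos : x ≠ 0 → 0 < hpolyR n (2 * k) x := by
    intro hx
    obtain ⟨i, hi⟩ : ∃ i, x i ≠ 0 := by
      by_contra h
      push_neg at h
      exact hx (funext h)
    set γ₀ : Fin n → ℕ := fun j => if j = i then k else 0 with hγ₀
    have hγmem : γ₀ ∈ Fintype.piFinset (fun _ : Fin n => range (k + 1)) := by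
      simp only [Fintype.mem_piFinset, mem_range, hγ₀]
      intro j; split <;> omega
    have hγsum : ∑ j, γ₀ j = k := by
      rw [hγ₀]; simp [Finset.sum_ite_eq']
    have hterm : (∑ α ∈ piAntidiag (univ : Finset (Fin n)) k,
          ((∏ j, (α j).choose (γ₀ j) : ℕ) : ℝ) * ∏ j, x j ^ α j) = x i ^ k := by
      rw [Finset.sum_eq_single γ₀]
      · have hc : ∏ j, (γ₀ j).choose (γ₀ j) = 1 := by simp [Nat.choose_self]
        have hxp : ∏ j, x j ^ γ₀ j = x i ^ k := by
          rw [Finset.prod_eq_single i]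
          · simp [hγ₀]
          · intro j _ hj; simp [hγ₀, hj]
          · simp
        rw [hc, hxp]; simp
      · intro α hα hne
        simp only [mem_piAntidiag, mem_univ, implies_true, and_true] at hα
        have : (α i).choose k = 0 := by
          apply Nat.choose_eq_zero_of_lt
          by_contra h
          push_neg at h
          -- α i ≥ k and sum = k forces α = γ₀
          have hsum : α i ≤ ∑ j, α j :=
            Finset.single_le_sum (fun j _ => Nat.zero_le _) (mem_univ i)
          have hα' : ∑ j, α j = k := hα
          have hαi : α i = k := by omega
          have hrest : ∀ j, j ≠ i → α j = 0 := by
            intro j hj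
            by_contra hz
            have hsplit : α i + ∑ t ∈ univ.erase i, α t = ∑ t, α t :=
              Finset.add_sum_erase univ α (mem_univ i)
            have h2 : α j ≤ ∑ t ∈ univ.erase i, α t :=
              Finset.single_le_sum (fun t _ => Nat.zero_le _)
                (Finset.mem_erase.mpr ⟨hj, mem_univ j⟩)
            omega
          apply hne
          funext j
          by_cases hj : j = i
          · subst hj; simp [hγ₀, hαi]
          · simp [hγ₀, hj, hrest j hj]
        rw [Finset.prod_eq_zero (mem_univ i) (by simpa [hγ₀] using this)]
        simp
      · intro h
        exact absurd (by simp only [mem_piAntidiag, mem_univ, implies_true, and_true]; exact hγsum) h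
    have hSpos : 0 < ∑ γ ∈ Fintype.piFinset (fun _ : Fin n => range (k + 1)),
        (∑ α ∈ piAntidiag (univ : Finset (Fin n)) k,
          ((∏ j, (α j).choose (γ j) : ℕ) : ℝ) * ∏ j, x j ^ α j) ^ 2 := by
      apply Finset.sum_pos' (fun γ _ => sq_nonneg _)
      exact ⟨γ₀, hγmem, by rw [hterm]; positivity⟩
    nlinarith [key]
  refine ⟨hpos, fun hk => ⟨hnonneg, ?_, ?_⟩⟩
  · intro h
    by_contra hx
    exact absurd h (ne_of_gt (hpos hx))
  · intro hx
    subst hx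
    unfold hpolyR
    apply Finset.sum_eq_zero
    intro α hα
    simp only [mem_filter] at hα
    obtain ⟨j, hj⟩ : ∃ j, α j ≠ 0 := by
      by_contra h
      push_neg at h
      have : ∑ i, α i = 0 := Finset.sum_eq_zero fun i _ => h i
      omega
    exact Finset.prod_eq_zero (mem_univ j) (by simp [zero_pow hj])
end
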